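/- arXiv:math/0411387 — 3 statements merged into one kernel-verified Lean document; each statement's English description precedes it below -/
import Mathlib

section
/- Let π be a nondecreasing parking function of length n whose distinct letters, in increasing order, have multiplicities m_1, m_2, …, m_r. Let 1^m denote the word of length m with all letters 1. Then the multiset { a * 1^n : a ∈ PF_n, a↑ = π } equals the iterated shifted shuffle 1^{m_1} ⋒ 1^{m_2} ⋒ ⋯ ⋒ 1^{m_r} (as multisets of parking functions of length n). (This is the identity P^π * J_n = J_{m_1} J_{m_2} ⋯ J_{m_r}.) -/
open List

/-- `sortW w` is the nondecreasing rearrangement `w↑` of the word `w`. -/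
def sortW (w : List ℕ) : List ℕ := w.mergeSort (fun a b => decide (a ≤ b))

/-- `a` is a parking function: a word over the positive integers whose
nondecreasing rearrangement `a↑ = a'₁ ⋯ a'ₙ` satisfies `a'ᵢ ≤ i` for all `i`. -/
def IsPF (a : List ℕ) : Prop :=
  (∀ x ∈ a, 1 ≤ x) ∧ ∀ i, i < a.length → (sortW a).getD i 0 ≤ i + 1

/-- `dW w = min { i ≥ 1 : #{j : wⱼ ≤ i} < i }`. -/
noncomputable def dW (w : List ℕ) : ℕ := sInf {i | 1 ≤ i ∧ w.countP (fun x => decide (x ≤ i)) < i}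

/-- Decrement by one every letter strictly greater than `d`. -/
def decAbove (d : ℕ) (w : List ℕ) : List ℕ := w.map (fun x => if d < x then x - 1 else x)

lemma mem_dW_set (w : List ℕ) :
    (w.length + 1) ∈ {i | 1 ≤ i ∧ w.countP (fun x => decide (x ≤ i)) < i} := by
  refine ⟨by omega, ?_⟩
  have := w.countP_le_length (p := fun x => decide (x ≤ w.length + 1))
  omega

lemma decAbove_sum_lt {w : List ℕ} (h : dW w ≠ w.length + 1) :
    (decAbove (dW w) w).sum < w.sum := by
  have hmem : 1 ≤ dW w ∧ w.countP (fun x => decide (x ≤ dW w)) < dW w := Nat.sInf_mem (⟨_, mem_dW_set w⟩ : Set.Nonempty _)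
  have hle : dW w ≤ w.length + 1 := Nat.sInf_le (mem_dW_set w)
  obtain ⟨h1, h2⟩ := hmem
  have hlen : dW w ≤ w.length := by omega
  -- there is a letter strictly greater than `dW w`
  have hx : ∃ x ∈ w, ¬ (x ≤ dW w) := by
    by_contra hc
    push_neg at hc
    have : w.countP (fun x => decide (x ≤ dW w)) = w.length := by
      rw [List.countP_eq_length]
      intro a ha
      simpa using hc a ha
    omega
  obtain ⟨x, hxw, hxd⟩ := hx
  have := List.sum_lt_sum (l := w) (f := fun y => if dW w < y then y - 1 else y) (g := id)
    (fun i _ => by dsimp; split <;> omega)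
    ⟨x, hxw, by dsimp; rw [if_pos (by omega)]; omega⟩
  simpa [decAbove] using this

/-- The parkization `Park(w)` of a word `w` over the positive integers. -/
noncomputable def park (w : List ℕ) : List ℕ :=
  if h : dW w = w.length + 1 then w
  else
    have : (decAbove (dW w) w).sum < w.sum := decAbove_sum_lt h
    park (decAbove (dW w) w)
termination_by w.sum

/-- The standardization `Std(w)`: its `i`-th letter is `#{j : wⱼ ≤ wᵢ}`. -/
def stdW (w : List ℕ) : List ℕ := w.map (fun x => w.countP (fun y => decide (y ≤ x)))

/-- `v[k]`: shift every letter of `v` by `k`. -/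
def shiftW (k : ℕ) (v : List ℕ) : List ℕ := v.map (· + k)

/-- Shifted concatenation `u • v = u · v[k]`, `k = |u|`. -/
def sconc (u v : List ℕ) : List ℕ := u ++ shiftW u.length v

/-- The multiset of all shuffles of two words, counted with multiplicity. -/
def shuffles : List ℕ → List ℕ → Multiset (List ℕ)
  | [], v => {v}
  | x :: u, [] => {x :: u}
  | x :: u, y :: v =>
      (shuffles u (y :: v)).map (fun w => x :: w) + (shuffles (x :: u) v).map (fun w => y :: w)
termination_by u v => u.length + v.length

/-- Shifted shuffle `u ⋒ v`, a multiset of words. -/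
def sshuffle (u v : List ℕ) : Multiset (List ℕ) := shuffles u (shiftW u.length v)

/-- Iterated shifted shuffle `u₁ ⋒ u₂ ⋒ ⋯ ⋒ u_r`. -/
def itersShuffle : List (List ℕ) → Multiset (List ℕ)
  | [] => {[]}
  | u :: rest => (itersShuffle rest).bind (fun v => sshuffle u v)

/-- Lexicographic pair-encoding `a ⊛ b` of two words of length `n` with letters in `[n]`:
the `i`-th letter is `(aᵢ - 1)·n + bᵢ`. -/
def pairEnc (n : ℕ) (a b : List ℕ) : List ℕ := List.zipWith (fun x y => (x - 1) * n + y) a b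

/-- The internal product `a * b := Park(a ⊛ b)` of two parking functions of the same length. -/
noncomputable def iprod (a b : List ℕ) : List ℕ := park (pairEnc a.length a b)

/-- The word `1^m` of length `m` with all letters equal to `1`. -/
def onesW (m : ℕ) : List ℕ := List.replicate m 1

/-- The multiset (without repetition) of all words `a` with `a↑ = π`. -/
def classM (π : List ℕ) : Multiset (List ℕ) :=
  (↑(π.permutations.dedup) : Multiset (List ℕ)).filter (fun a => sortW a = π)

open Classical in
/-- The finite set of all parking functions of length `n`. -/
noncomputable def PFfin (n : ℕ) : Finset (List ℕ) :=
  ((Finset.univ : Finset (Fin n → Fin n)).image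
    (fun f => List.ofFn (fun i => (f i : ℕ) + 1))).filter IsPF

/-- Split a word into consecutive factors of the given lengths. -/
def splitFactors : List ℕ → List ℕ → List (List ℕ)
  | [], _ => []
  | k :: ks, e => e.take k :: splitFactors ks (e.drop k)

/-- Iterated shifted concatenation. -/
def sconcAll : List (List ℕ) → List ℕ
  | [] => []
  | u :: rest => sconc u (sconcAll rest)

/-- Multiset of tuples `(a₁, …, a_r)` (as lists) with `aᵢ↑ = πᵢ`. -/
def tuplesM : List (List ℕ) → Multiset (List (List ℕ))
  | [] => {[]}
  | p :: ps => (classM p).bind (fun a => (tuplesM ps).map (fun A => a :: A))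

/-- `π'` is a successor of `π`: the evaluation of `π'` is obtained from that of `π`
by merging two consecutive (modulo zeros) nonzero entries onto the left one. -/
def IsSuccEv (π π' : List ℕ) : Prop :=
  ∃ i j : ℕ, 1 ≤ i ∧ i < j ∧ π.count i ≠ 0 ∧ π.count j ≠ 0 ∧
    (∀ k, i < k → k < j → π.count k = 0) ∧
    (∀ m, π'.count m = if m = i then π.count i + π.count j else if m = j then 0 else π.count m)

/-- The partial order `π ⪯ π'`: reflexive–transitive closure of the successor relation. -/
def succeq (π π' : List ℕ) : Prop := Relation.ReflTransGen IsSuccEv π π'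

/-!
The word `a ⊛ 1ⁿ` replaces each letter `x` of `a` by `(x - 1)·n + 1`, which leaves gaps between
distinct letters at least as wide as the word is long. On such "spread" words parkization only
closes the gaps, so `a * 1ⁿ` replaces each letter `x` by `1 + #{letters of a below x}`. When
`a↑ = π` this count depends only on `π`, hence the left-hand side is the set of rearrangements
of `rank(π) = 1^{m₁} (m₁+1)^{m₂} ⋯`. Finally, the rearrangements of `1^m · σ[m]` are the
shuffles of `1^m` with the rearrangements of `σ[m]`, each obtained exactly once, and induction
over the blocks of equal letters of `π` yields the iterated shifted shuffle.
-/

def countLt (w : List ℕ) (x : ℕ) : ℕ := w.countP (fun z => decide (z < x))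

/-- Each letter `x` is replaced by the position of its first occurrence in `w↑`. -/
def rankW (w : List ℕ) : List ℕ := w.map (fun x => countLt w x + 1)

lemma countP_le_eq_countLt_add_count (w : List ℕ) (x : ℕ) :
    w.countP (fun z => decide (z ≤ x)) = countLt w x + w.count x := by
  induction w with
  | nil => rfl
  | cons a w ih =>
    simp only [countLt, List.countP_cons, List.count_cons, beq_iff_eq, decide_eq_true_eq] at ih ⊢
    split_ifs <;> omega

lemma countLt_append (a b : List ℕ) (x : ℕ) : countLt (a ++ b) x = countLt a x + countLt b x :=
  List.countP_append

lemma countLt_succ (w : List ℕ) (i : ℕ) :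
    countLt w (i + 1) = w.countP (fun z => decide (z ≤ i)) := by
  simp only [countLt, Nat.lt_succ_iff]

lemma countLt_mono (w : List ℕ) {x y : ℕ} (hxy : x ≤ y) : countLt w x ≤ countLt w y :=
  List.countP_mono_left fun z _ hz => by simp only [decide_eq_true_eq] at hz ⊢; omega

lemma countLt_lt_countLt {w : List ℕ} {x y : ℕ} (hx : x ∈ w) (hxy : x < y) :
    countLt w x < countLt w y := by
  have hle : w.countP (fun z => decide (z ≤ x)) ≤ countLt w y :=
    List.countP_mono_left fun z _ hz => by simp only [decide_eq_true_eq] at hz ⊢; omega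
  have := countP_le_eq_countLt_add_count w x
  have := List.count_pos_iff.2 hx
  omega

lemma monotone_countLt_succ (w : List ℕ) : Monotone (fun x => countLt w x + 1) :=
  fun _ _ h => Nat.succ_le_succ (countLt_mono w h)

lemma strictMonoOn_countLt_succ (w : List ℕ) :
    StrictMonoOn (fun x => countLt w x + 1) {x | x ∈ w} :=
  fun _ hx _ _ h => Nat.succ_lt_succ (countLt_lt_countLt hx h)

lemma countLt_map {f : ℕ → ℕ} {w : List ℕ} (hf : StrictMonoOn f {z | z ∈ w}) {x : ℕ}
    (hx : x ∈ w) : countLt (w.map f) (f x) = countLt w x := by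
  simp only [countLt, List.countP_map]
  exact List.countP_congr fun z hz => by simpa using hf.lt_iff_lt hz hx

lemma rankW_map {f : ℕ → ℕ} {w : List ℕ} (hf : StrictMonoOn f {z | z ∈ w}) :
    rankW (w.map f) = rankW w := by
  simp only [rankW, List.map_map]
  exact List.map_congr_left fun x hx => by simp [countLt_map hf hx]

lemma rankW_eq_of_perm {a w : List ℕ} (h : a.Perm w) :
    rankW a = a.map (fun x => countLt w x + 1) :=
  List.map_congr_left fun x _ => by simp only [countLt, h.countP_eq]

lemma dW_spec (w : List ℕ) :
    1 ≤ dW w ∧ w.countP (fun x => decide (x ≤ dW w)) < dW w :=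
  Nat.sInf_mem ⟨_, mem_dW_set w⟩

lemma le_countP_of_lt_dW {w : List ℕ} {i : ℕ} (hi : 1 ≤ i) (h : i < dW w) :
    i ≤ w.countP (fun x => decide (x ≤ i)) := by
  by_contra hlt
  exact Nat.notMem_of_lt_sInf h ⟨hi, by omega⟩

lemma sub_one_le_countLt {w : List ℕ} {x : ℕ} (hx : x ≤ dW w) : x - 1 ≤ countLt w x := by
  rcases x with _ | _ | i
  · simp
  · simp
  · rw [countLt_succ]
    exact le_countP_of_lt_dW (by omega) (by omega)

lemma dW_notMem (w : List ℕ) : dW w ∉ w := by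
  intro hd
  have := dW_spec w
  have := sub_one_le_countLt (w := w) le_rfl
  have := countP_le_eq_countLt_add_count w (dW w)
  have := List.count_pos_iff.2 hd
  omega

lemma le_length_of_dW_eq {w : List ℕ} (h : dW w = w.length + 1) {x : ℕ} (hx : x ∈ w) :
    x ≤ w.length := by
  have hlen : 1 ≤ w.length := List.length_pos_of_mem hx
  have hall := le_countP_of_lt_dW (w := w) hlen (by rw [h]; omega)
  have := List.countP_eq_length.1 (le_antisymm List.countP_le_length hall) x hx
  simpa using this

/-- `x ↦ x - countLt w x` is positive and nondecreasing on the letters of `w`. -/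
def Spread (w : List ℕ) : Prop :=
  (∀ x ∈ w, countLt w x < x) ∧ ∀ x ∈ w, ∀ y ∈ w, x ≤ y → x + countLt w y ≤ y + countLt w x

def decAboveFun (d x : ℕ) : ℕ := if d < x then x - 1 else x

lemma decAbove_eq_map (d : ℕ) (w : List ℕ) : decAbove d w = w.map (decAboveFun d) := rfl

lemma strictMonoOn_decAboveFun (d : ℕ) : StrictMonoOn (decAboveFun d) {x | x ≠ d} := by
  intro x (hx : x ≠ d) y (hy : y ≠ d) hxy
  simp only [decAboveFun]
  split_ifs <;> omega

lemma strictMonoOn_decAboveFun_dW (w : List ℕ) : StrictMonoOn (decAboveFun (dW w)) {x | x ∈ w} :=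
  (strictMonoOn_decAboveFun _).mono fun _ hx hxd => dW_notMem w (hxd ▸ hx)

namespace Spread

lemma rankW_eq_self_of_dW_eq {w : List ℕ} (hs : Spread w) (h : dW w = w.length + 1) :
    rankW w = w := by
  refine (List.map_congr_left fun x hx => ?_).trans (List.map_id w)
  have := hs.1 x hx
  have := sub_one_le_countLt (w := w) (x := x) (by have := le_length_of_dW_eq h hx; omega)
  simp only [id]
  omega

lemma countLt_add_two_le {w : List ℕ} (hs : Spread w) {y : ℕ} (hy : y ∈ w) (hdy : dW w < y) :
    countLt w y + 2 ≤ y := by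
  induction y using Nat.strong_induction_on with
  | _ y ih =>
  by_cases hmid : ∃ z ∈ w, dW w < z ∧ z < y
  · obtain ⟨z, hz, hdz, hzy⟩ := hmid
    have := ih z hzy hz hdz
    have := hs.2 z hz y hy hzy.le
    omega
  · -- `y` is the least letter above `dW w`, so the letters below it are those `≤ dW w`
    simp only [not_exists, not_and, not_lt] at hmid
    have hcount : countLt w y = w.countP (fun z => decide (z ≤ dW w)) :=
      List.countP_congr fun z hz => by
        have := hmid z hz
        simp only [decide_eq_true_eq]
        omega
    have := dW_spec w
    omega

lemma decAbove {w : List ℕ} (hs : Spread w) : Spread (decAbove (dW w) w) := by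
  have hmono := strictMonoOn_decAboveFun_dW w
  rw [decAbove_eq_map]
  constructor
  · simp only [List.mem_map, forall_exists_index, and_imp, forall_apply_eq_imp_iff₂]
    intro x hx
    rw [countLt_map hmono hx, decAboveFun]
    have := hs.1 x hx
    split_ifs with hdx
    · have := hs.countLt_add_two_le hx hdx
      omega
    · omega
  · simp only [List.mem_map, forall_exists_index, and_imp, forall_apply_eq_imp_iff₂]
    intro x hx y hy hfxy
    rw [countLt_map hmono hx, countLt_map hmono hy]
    have hxy : x ≤ y := (hmono.le_iff_le hx hy).1 hfxy
    have := hs.2 x hx y hy hxy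
    have hxd : x ≠ dW w := fun h => dW_notMem w (h ▸ hx)
    by_cases hdy : dW w < y
    · have := hs.countLt_add_two_le hy hdy
      have := sub_one_le_countLt (w := w) (x := x)
      simp only [decAboveFun]
      split_ifs <;> omega
    · simp only [decAboveFun]
      split_ifs <;> omega

end Spread

lemma park_eq_rankW {w : List ℕ} (hs : Spread w) : park w = rankW w := by
  rw [park]
  split_ifs with h
  · exact (hs.rankW_eq_self_of_dW_eq h).symm
  · rw [park_eq_rankW hs.decAbove, decAbove_eq_map, rankW_map (strictMonoOn_decAboveFun_dW w)]
termination_by w.sum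
decreasing_by exact decAbove_sum_lt h

lemma zipWith_replicate_length_right {α β γ : Type*} (f : α → β → γ) (a : List α) (c : β) :
    List.zipWith f a (List.replicate a.length c) = a.map (f · c) := by
  induction a <;> simp_all [List.replicate_succ]

lemma dilate_gap (n : ℕ) {x y : ℕ} (hx : 1 ≤ x) (hxy : x < y) :
    (x - 1) * n + n ≤ (y - 1) * n := by
  rw [← Nat.succ_mul]
  exact Nat.mul_le_mul_right n (by omega)

lemma strictMonoOn_dilate {a : List ℕ} (hpos : ∀ x ∈ a, 1 ≤ x) :
    StrictMonoOn (fun x => (x - 1) * a.length + 1) {x | x ∈ a} := fun x hx y _ hxy => by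
  have := dilate_gap a.length (hpos x hx) hxy
  have : 1 ≤ a.length := List.length_pos_of_mem hx
  simp only
  omega

lemma spread_map_dilate {a : List ℕ} (hpos : ∀ x ∈ a, 1 ≤ x) :
    Spread (a.map (fun x => (x - 1) * a.length + 1)) := by
  have hmono := strictMonoOn_dilate hpos
  have hcount (x) : countLt a x ≤ a.length := List.countP_le_length
  constructor
  · simp only [List.mem_map, forall_exists_index, and_imp, forall_apply_eq_imp_iff₂]
    intro x hx
    rw [countLt_map hmono hx]
    rcases (hpos x hx).eq_or_lt with rfl | hx1
    · have : countLt a 1 = 0 := List.countP_eq_zero.2 fun z hz => by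
        have := hpos z hz
        simp only [decide_eq_true_eq]
        omega
      omega
    · have := Nat.le_mul_of_pos_left a.length (by omega : 0 < x - 1)
      have := hcount x
      omega
  · simp only [List.mem_map, forall_exists_index, and_imp, forall_apply_eq_imp_iff₂]
    intro x hx y hy hfxy
    rw [countLt_map hmono hx, countLt_map hmono hy]
    rcases ((hmono.le_iff_le hx hy).1 hfxy).eq_or_lt with rfl | hxy
    · rfl
    · have := dilate_gap a.length (hpos x hx) hxy
      have := hcount y
      omega

lemma iprod_onesW {a : List ℕ} (hpos : ∀ x ∈ a, 1 ≤ x) :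
    iprod a (onesW a.length) = rankW a := by
  rw [iprod, pairEnc, onesW, zipWith_replicate_length_right,
    park_eq_rankW (spread_map_dilate hpos), rankW_map (strictMonoOn_dilate hpos)]

lemma sortW_perm (w : List ℕ) : (sortW w).Perm w := List.mergeSort_perm w _

lemma sortW_sorted (w : List ℕ) : (sortW w).Pairwise (· ≤ ·) := List.pairwise_mergeSort' _ w

lemma mem_classM {π : List ℕ} (hs : π.Pairwise (· ≤ ·)) {a : List ℕ} :
    a ∈ classM π ↔ a.Perm π := by
  rw [classM, Multiset.mem_filter, Multiset.mem_coe, List.mem_dedup, List.mem_permutations]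
  exact ⟨And.left, fun h => ⟨h, (sortW_perm a |>.trans h).eq_of_pairwise' (sortW_sorted a) hs⟩⟩

lemma classM_nodup (π : List ℕ) : (classM π).Nodup :=
  (Multiset.coe_nodup.2 (List.nodup_dedup _)).filter _

lemma classM_nil : classM [] = {[]} :=
  (Multiset.Nodup.ext (classM_nodup _) (Multiset.nodup_singleton _)).2 fun a => by
    simp [mem_classM List.Pairwise.nil]

lemma map_classM {π : List ℕ} (hs : π.Pairwise (· ≤ ·)) {h : ℕ → ℕ} (hmono : Monotone h)
    (hinj : Set.InjOn h {x | x ∈ π}) :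
    (classM π).map (List.map h) = classM (π.map h) := by
  have hs' : (π.map h).Pairwise (· ≤ ·) := List.pairwise_map.2 (hs.imp fun hxy => hmono hxy)
  refine (Multiset.Nodup.ext ((classM_nodup π).map_on ?_) (classM_nodup _)).2 fun w => ?_
  · intro a ha b hb hab
    rw [mem_classM hs] at ha hb
    have hlen : a.length = b.length := by simpa using congrArg List.length hab
    refine List.ext_getElem hlen fun i hia hib => hinj (ha.subset (List.getElem_mem hia))
      (hb.subset (List.getElem_mem hib)) ?_
    simpa [List.getElem?_eq_getElem hia, List.getElem?_eq_getElem hib] using congrArg (·[i]?) hab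
  · rw [Multiset.mem_map, mem_classM hs']
    constructor
    · rintro ⟨a, ha, rfl⟩
      exact ((mem_classM hs).1 ha).map h
    · intro hw
      rw [← List.mem_permutations, ← List.map_permutations, List.mem_map] at hw
      obtain ⟨a, ha, rfl⟩ := hw
      exact ⟨a, (mem_classM hs).2 (List.mem_permutations.1 ha), rfl⟩

lemma mem_shuffles {p : ℕ → Bool} {u v : List ℕ} (hu : ∀ x ∈ u, p x) (hv : ∀ y ∈ v, p y = false)
    {w : List ℕ} : w ∈ shuffles u v ↔ w.filter p = u ∧ w.filter (!p ·) = v := by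
  induction u, v using shuffles.induct generalizing w with
  | case1 v =>
    rw [shuffles, Multiset.mem_singleton]
    constructor
    · rintro rfl
      simp_all [List.filter_eq_nil_iff]
    · rintro ⟨h1, rfl⟩
      rw [eq_comm, List.filter_eq_self]
      simpa [List.filter_eq_nil_iff] using h1
  | case2 x u =>
    rw [shuffles, Multiset.mem_singleton]
    constructor
    · rintro rfl
      simp_all [List.filter_eq_nil_iff]
    · rintro ⟨h1, h2⟩
      rw [← h1, eq_comm, List.filter_eq_self]
      simpa [List.filter_eq_nil_iff] using h2
  | case3 x u y v ih1 ih2 =>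
    have hx : p x := hu x List.mem_cons_self
    have hy : p y = false := hv y List.mem_cons_self
    rw [shuffles, Multiset.mem_add, Multiset.mem_map, Multiset.mem_map]
    constructor
    · rintro (⟨w, hw, rfl⟩ | ⟨w, hw, rfl⟩)
      · simp_all
      · simp_all
    · rcases w with _ | ⟨a, w⟩
      · simp
      · intro ⟨h1, h2⟩
        by_cases ha : p a
        · simp only [List.filter_cons, ha, if_true, Bool.not_true, Bool.false_eq_true, if_false,
            List.cons.injEq] at h1 h2
          obtain ⟨rfl, h1⟩ := h1
          exact Or.inl ⟨w, (ih1 (fun z hz => hu z (List.mem_cons_of_mem _ hz)) hv).2 ⟨h1, h2⟩, rfl⟩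
        · simp only [List.filter_cons, ha, if_true, Bool.not_false, Bool.false_eq_true, if_false,
            List.cons.injEq] at h1 h2
          obtain ⟨rfl, h2⟩ := h2
          exact Or.inr ⟨w, (ih2 hu fun z hz => hv z (List.mem_cons_of_mem _ hz)).2 ⟨h1, h2⟩, rfl⟩

lemma nodup_shuffles {p : ℕ → Bool} {u v : List ℕ} (hu : ∀ x ∈ u, p x)
    (hv : ∀ y ∈ v, p y = false) : (shuffles u v).Nodup := by
  induction u, v using shuffles.induct with
  | case1 v => simp [shuffles]
  | case2 x u => simp [shuffles]
  | case3 x u y v ih1 ih2 =>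
    have hxy : x ≠ y := fun h => by
      simpa [h, hv y List.mem_cons_self] using hu x List.mem_cons_self
    rw [shuffles, Multiset.nodup_add]
    refine ⟨(ih1 (fun z hz => hu z (List.mem_cons_of_mem _ hz)) hv).map List.cons_injective,
      (ih2 hu fun z hz => hv z (List.mem_cons_of_mem _ hz)).map List.cons_injective, ?_⟩
    simp [Multiset.disjoint_map_map, hxy]

lemma classM_bind_shuffles_replicate {c m : ℕ} {S : List ℕ} (hS : S.Pairwise (· ≤ ·))
    (hcS : ∀ y ∈ S, c < y) :
    (classM S).bind (shuffles (List.replicate m c)) = classM (List.replicate m c ++ S) := by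
  set p : ℕ → Bool := fun z => decide (z = c)
  have hu : ∀ x ∈ List.replicate m c, p x := fun x hx => by simp [p, List.eq_of_mem_replicate hx]
  have hv {v} (hmem : v ∈ classM S) : ∀ y ∈ v, p y = false := fun y hy => by
    have := hcS y (((mem_classM hS).1 hmem).subset hy)
    simp only [p, decide_eq_false_iff_not]
    omega
  have hsorted : (List.replicate m c ++ S).Pairwise (· ≤ ·) := by
    refine List.pairwise_append.2 ⟨List.pairwise_replicate.2 (Or.inr le_rfl), hS, ?_⟩
    intro a ha b hb
    rw [List.eq_of_mem_replicate ha]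
    exact (hcS b hb).le
  have hnodup : ((classM S).bind (shuffles (List.replicate m c))).Nodup := by
    refine Multiset.nodup_bind.2 ⟨fun v hv' => nodup_shuffles hu (hv hv'), ?_⟩
    refine (classM_nodup S).pairwise fun a ha b hb hab =>
      Multiset.disjoint_left.2 fun hwa hwb => hab ?_
    exact (((mem_shuffles hu (hv ha)).1 hwa).2.symm.trans ((mem_shuffles hu (hv hb)).1 hwb).2)
  refine (Multiset.Nodup.ext hnodup (classM_nodup _)).2 fun w => ?_
  rw [Multiset.mem_bind, mem_classM hsorted]
  constructor
  · rintro ⟨v, hvS, hw⟩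
    obtain ⟨h1, h2⟩ := (mem_shuffles hu (hv hvS)).1 hw
    calc w.Perm (w.filter p ++ w.filter (!p ·)) := (List.filter_append_perm p w).symm
      _ = List.replicate m c ++ v := by rw [h1, h2]
      _ ~ List.replicate m c ++ S := ((mem_classM hS).1 hvS).append_left _
  · intro hw
    have hS' : ∀ y ∈ S, p y = false := fun y hy => by simpa [p] using (hcS y hy).ne'
    have hfilter : (List.replicate m c ++ S).filter p = List.replicate m c := by
      rw [List.filter_append, List.filter_eq_self.2 hu,
        List.filter_eq_nil_iff.2 (by simpa using hS'), List.append_nil]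
    have hfilter' : (List.replicate m c ++ S).filter (!p ·) = S := by
      rw [List.filter_append, List.filter_eq_nil_iff.2 (by simpa using hu),
        List.filter_eq_self.2 (by simpa using hS'), List.nil_append]
    have hvS : w.filter (!p ·) ∈ classM S := (mem_classM hS).2 (hfilter' ▸ hw.filter _)
    refine ⟨_, hvS, (mem_shuffles hu (hv hvS)).2 ⟨?_, rfl⟩⟩
    exact List.perm_replicate.1 (hfilter ▸ hw.filter p)

lemma classM_bind_sshuffle_onesW {m : ℕ} (hm : 0 < m) {σ : List ℕ} (hσ : σ.Pairwise (· ≤ ·))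
    (hpos : ∀ x ∈ σ, 1 ≤ x) :
    (classM σ).bind (sshuffle (onesW m)) = classM (onesW m ++ shiftW m σ) := by
  have hshift : (classM σ).map (shiftW m) = classM (shiftW m σ) :=
    map_classM hσ (fun _ _ h => by simpa using h) (add_left_injective m).injOn
  have hbind : (classM σ).bind (sshuffle (onesW m))
      = ((classM σ).map (shiftW m)).bind (shuffles (onesW m)) := by
    rw [Multiset.bind_map]
    congr 1
    funext v
    rw [sshuffle, onesW, List.length_replicate]
  rw [hbind, hshift]
  refine classM_bind_shuffles_replicate (hσ.map _ fun _ _ h => Nat.add_le_add_right h m)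
    fun y hy => ?_
  obtain ⟨x, hx, rfl⟩ := List.mem_map.1 hy
  have := hpos x hx
  omega

lemma exists_eq_replicate_append {π : List ℕ} (hs : π.Pairwise (· ≤ ·)) (hne : π ≠ []) :
    ∃ v m ρ, 0 < m ∧ (∀ y ∈ ρ, v < y) ∧ π = List.replicate m v ++ ρ := by
  induction π with
  | nil => exact absurd rfl hne
  | cons a t ih =>
    rcases eq_or_ne t [] with rfl | ht
    · exact ⟨a, 1, [], one_pos, by simp, rfl⟩
    obtain ⟨v, m, ρ, hm, hρ, rfl⟩ := ih hs.of_cons ht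
    have hav : a ≤ v :=
      List.rel_of_pairwise_cons hs (List.mem_append_left _ (List.mem_replicate.2 ⟨hm.ne', rfl⟩))
    rcases hav.eq_or_lt with rfl | hav
    · exact ⟨a, m + 1, ρ, m.succ_pos, hρ, rfl⟩
    · refine ⟨a, 1, List.replicate m v ++ ρ, one_pos, fun y hy => ?_, rfl⟩
      rcases List.mem_append.1 hy with hy | hy
      · rw [List.eq_of_mem_replicate hy]; exact hav
      · exact hav.trans (hρ y hy)

lemma dedup_replicate_append {v m : ℕ} {ρ : List ℕ} (hm : 0 < m) (hv : v ∉ ρ) :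
    (List.replicate m v ++ ρ).dedup = v :: ρ.dedup := by
  induction m with
  | zero => exact absurd hm (lt_irrefl 0)
  | succ m ih =>
    rw [List.replicate_succ, List.cons_append]
    rcases Nat.eq_zero_or_pos m with rfl | hm
    · exact List.dedup_cons_of_notMem hv
    · have hvmem : v ∈ List.replicate m v ++ ρ :=
        List.mem_append_left _ (List.mem_replicate.2 ⟨hm.ne', rfl⟩)
      rw [List.dedup_cons_of_mem hvmem, ih hm]

lemma rankW_replicate_append {v m : ℕ} {ρ : List ℕ} (hρ : ∀ y ∈ ρ, v < y) :
    rankW (List.replicate m v ++ ρ) = onesW m ++ shiftW m (rankW ρ) := by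
  rw [rankW, List.map_append, List.map_replicate, shiftW, rankW, List.map_map]
  have hρv : countLt ρ v = 0 := List.countP_eq_zero.2 fun y hy => by simpa using (hρ y hy).le
  congr 1
  · have : countLt (List.replicate m v) v = 0 := by simp [countLt]
    simp only [countLt_append, this, hρv, onesW]
  · refine List.map_congr_left fun y hy => ?_
    have : countLt (List.replicate m v) y = m := by
      simp [countLt, List.countP_replicate, hρ y hy]
    simp only [countLt_append, this, Function.comp_apply]
    omega

lemma rankW_pairwise {w : List ℕ} (hs : w.Pairwise (· ≤ ·)) : (rankW w).Pairwise (· ≤ ·) :=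
  hs.map _ fun _ _ h => monotone_countLt_succ w h

lemma itersShuffle_eq_classM_rankW {π : List ℕ} (hs : π.Pairwise (· ≤ ·)) :
    itersShuffle ((π.dedup.map (fun x => π.count x)).map onesW) = classM (rankW π) := by
  induction hl : π.length using Nat.strong_induction_on generalizing π with
  | _ n ih =>
  rcases eq_or_ne π [] with rfl | hne
  · simp [itersShuffle, rankW, classM_nil]
  obtain ⟨v, m, ρ, hm, hρ, rfl⟩ := exists_eq_replicate_append hs hne
  have hvρ : v ∉ ρ := fun h => lt_irrefl v (hρ v h)
  have hρs : ρ.Pairwise (· ≤ ·) := hs.sublist (List.sublist_append_right _ _)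
  have hcount : ∀ x ∈ ρ.dedup, (List.replicate m v ++ ρ).count x = ρ.count x := fun x hx => by
    have : v ≠ x := (hρ x (List.mem_dedup.1 hx)).ne
    simp [List.count_replicate, this]
  have hcount_v : (List.replicate m v ++ ρ).count v = m := by
    simp [List.count_eq_zero_of_not_mem hvρ]
  rw [dedup_replicate_append hm hvρ, List.map_cons, List.map_cons, hcount_v,
    List.map_congr_left hcount, itersShuffle, ih ρ.length (by simp [← hl]; omega) hρs rfl,
    rankW_replicate_append hρ]
  exact classM_bind_sshuffle_onesW hm (rankW_pairwise hρs) (by simp [rankW])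

/-- for a nondecreasing parking function `π` of length `n` whose distinct
letters, in increasing order, have multiplicities `m₁, …, m_r`, the multiset
`{a * 1ⁿ : a↑ = π}` equals the iterated shifted shuffle `1^{m₁} ⋒ ⋯ ⋒ 1^{m_r}`
(this is `P^π * J_n = J_{m₁} ⋯ J_{m_r}`). -/
theorem Ppi_star_Jn (n : ℕ) (pi : List ℕ) (hpi : IsPF pi)
    (hpis : pi.Pairwise (· ≤ ·)) (hlen : pi.length = n) :
    (classM pi).map (fun a => iprod a (onesW n))
      = itersShuffle ((pi.dedup.map (fun x => pi.count x)).map onesW) := by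
  subst hlen
  have hrank : ∀ a ∈ classM pi, iprod a (onesW pi.length) = a.map (fun x => countLt pi x + 1) :=
    fun a ha => by
      have hperm := (mem_classM hpis).1 ha
      rw [← hperm.length_eq, iprod_onesW fun x hx => hpi.1 x (hperm.subset hx),
        rankW_eq_of_perm hperm]
  rw [Multiset.map_congr rfl hrank, map_classM hpis (monotone_countLt_succ pi)
    (strictMonoOn_countLt_succ pi).injOn, itersShuffle_eq_classM_rankW hpis]
  rfl
end

section
/- Let π be a nondecreasing parking function of length n and let 0 ≤ j ≤ n. If c, c' ∈ PF_j satisfy c↑ = c'↑ and d, d' ∈ PF_{n−j} satisfy d↑ = d'↑, then #{ a ∈ PF_n : a↑ = π, Park(a_1⋯a_j) = c, Park(a_{j+1}⋯a_n) = d } = #{ a ∈ PF_n : a↑ = π, Park(a_1⋯a_j) = c', Park(a_{j+1}⋯a_n) = d' }. (This expresses that the class sums P^π = Σ_{a↑=π} F_a span a subcoalgebra CQSym of PQSym.) -/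
/-!
Parkization only relabels letters, by a map that depends on the multiset of letters alone, so
it commutes with every permutation of positions. Given `c↑ = c'↑` and `d↑ = d'↑`, choose
permutations of positions `σ`, `τ` carrying `c` to `c'` and `d` to `d'`. Permuting the first
`j` letters of `a` by `σ` and the others by `τ` preserves `a↑` and maps the words counted for
`(c, d)` injectively to those counted for `(c', d')`; by symmetry the two counts agree.
-/

open List

lemma sortW_eq_sortW_iff_perm {u v : List ℕ} : sortW u = sortW v ↔ u ~ v :=
  ⟨fun h => ((List.mergeSort_perm u _).symm.trans (List.Perm.of_eq h)).trans
    (List.mergeSort_perm v _),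
    fun h => congrArg (fun s : Multiset ℕ => s.sort (· ≤ ·)) (Multiset.coe_eq_coe.2 h)⟩

lemma IsPF.of_perm {u v : List ℕ} (h : u ~ v) (hu : IsPF u) : IsPF v :=
  ⟨fun x hx => hu.1 x (h.mem_iff.2 hx), by
    rw [← h.length_eq, ← sortW_eq_sortW_iff_perm.2 h]; exact hu.2⟩

lemma dW_eq_of_perm {u v : List ℕ} (h : u ~ v) : dW u = dW v := by
  simp only [dW, h.countP_eq]

lemma exists_park_eq_map (w : List ℕ) : ∃ f : ℕ → ℕ, ∀ v, v ~ w → park v = v.map f := by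
  induction w using park.induct with
  | case1 w hw =>
    refine ⟨id, fun v hv => ?_⟩
    rw [park, dif_pos (by rwa [dW_eq_of_perm hv, hv.length_eq]), List.map_id]
  | case2 w hw _ ih =>
    obtain ⟨f, hf⟩ := ih
    refine ⟨f ∘ fun x => if dW w < x then x - 1 else x, fun v hv => ?_⟩
    rw [park, dif_neg (by rwa [dW_eq_of_perm hv, hv.length_eq])]
    change park (decAbove (dW v) v) = _
    rw [dW_eq_of_perm hv, hf (decAbove _ v) (hv.map _), decAbove, List.map_map]

lemma length_park (w : List ℕ) : (park w).length = w.length := by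
  obtain ⟨f, hf⟩ := exists_park_eq_map w
  rw [hf w (List.Perm.refl w), List.length_map]

/-- Meant for `u` of length `m`; positions beyond the end of `u` read as `0`. -/
def permuteW {m : ℕ} (σ : Equiv.Perm (Fin m)) (u : List ℕ) : List ℕ :=
  List.ofFn fun i => u.getD (σ i) 0

section permuteW

variable {m : ℕ} (σ : Equiv.Perm (Fin m)) {u : List ℕ}

@[simp]
lemma length_permuteW : (permuteW σ u).length = m := List.length_ofFn

lemma permuteW_perm (hu : u.length = m) : permuteW σ u ~ u := by
  subst hu
  calc permuteW σ u = List.ofFn ((fun i : Fin u.length => u[i]) ∘ σ) := by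
        simp [permuteW, Function.comp_def]
    _ ~ List.ofFn fun i : Fin u.length => u[i] := σ.ofFn_comp_perm _
    _ = u := List.ofFn_getElem

lemma permuteW_map (hu : u.length = m) (f : ℕ → ℕ) :
    permuteW σ (u.map f) = (permuteW σ u).map f := by
  subst hu
  simp [permuteW, List.map_ofFn, Function.comp_def]

lemma permuteW_injOn : Set.InjOn (permuteW σ) {u | u.length = m} := by
  intro u hu v hv h
  refine List.ext_getElem (hu.trans hv.symm) fun i hiu hiv => ?_
  have := congrArg (·[(σ.symm ⟨i, hu ▸ hiu⟩ : ℕ)]?) h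
  simpa [permuteW, List.getElem?_eq_getElem hiu, List.getElem?_eq_getElem hiv] using this

lemma park_permuteW (hu : u.length = m) : park (permuteW σ u) = permuteW σ (park u) := by
  obtain ⟨f, hf⟩ := exists_park_eq_map u
  rw [hf _ (permuteW_perm σ hu), hf u (List.Perm.refl u), permuteW_map σ hu]

end permuteW

lemma List.Perm.exists_permuteW_eq {u v : List ℕ} (h : u ~ v) :
    ∃ σ : Equiv.Perm (Fin u.length), permuteW σ u = v := by
  have hlen := h.length_eq
  refine ⟨(finCongr hlen).trans (Equiv.ofBijective _ ⟨h.symm.idxBij_injective,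
    h.symm.idxBij_surjective⟩), List.ext_getElem (by simpa using hlen) fun i hi _ => ?_⟩
  simp only [permuteW, List.getElem_ofFn, Equiv.trans_apply, finCongr_apply]
  rw [List.getD_eq_getElem]
  exact h.symm.getElem_idxBij_eq_getElem _

lemma List.take_drop_append_of_length_eq {α : Type*} {a x y : List α} {j : ℕ}
    (hx : x.length = (a.take j).length) (hy : y.length = (a.drop j).length) :
    (x ++ y).take j = x ∧ (x ++ y).drop j = y := by
  simp only [List.length_take, List.length_drop] at hx hy
  by_cases hj : j ≤ a.length
  · exact ⟨List.take_left' (by omega), List.drop_left' (by omega)⟩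
  · rw [List.length_eq_zero_iff.1 (by omega : y.length = 0), List.append_nil]
    exact ⟨List.take_of_length_le (by omega), List.drop_of_length_le (by omega)⟩

/-- The words `a` with `a↑ = π` counted by the coefficient of `F_c ⊗ F_d` in the
coproduct of `P^π`. -/
def coproductFiber (pi : List ℕ) (j : ℕ) (c d : List ℕ) : Set (List ℕ) :=
  {a | IsPF a ∧ sortW a = pi ∧ park (a.take j) = c ∧ park (a.drop j) = d}

lemma perm_of_mem_coproductFiber {pi c d : List ℕ} {j : ℕ} {a : List ℕ}
    (ha : a ∈ coproductFiber pi j c d) : a ~ pi :=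
  ha.2.1 ▸ (List.mergeSort_perm a _).symm

lemma ncard_coproductFiber_le {pi c c' d d' : List ℕ} (j : ℕ) (hc : c ~ c') (hd : d ~ d') :
    (coproductFiber pi j c d).ncard ≤ (coproductFiber pi j c' d').ncard := by
  obtain ⟨σ, rfl⟩ := hc.exists_permuteW_eq
  obtain ⟨τ, rfl⟩ := hd.exists_permuteW_eq
  have hlen {a} (ha : a ∈ coproductFiber pi j c d) :
      (a.take j).length = c.length ∧ (a.drop j).length = d.length := by
    rw [← ha.2.2.1, ← ha.2.2.2, length_park, length_park]; exact ⟨rfl, rfl⟩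
  set Φ : List ℕ → List ℕ := fun a => permuteW σ (a.take j) ++ permuteW τ (a.drop j)
  have hsplit {a} (ha : a ∈ coproductFiber pi j c d) :
      (Φ a).take j = permuteW σ (a.take j) ∧ (Φ a).drop j = permuteW τ (a.drop j) :=
    List.take_drop_append_of_length_eq (a := a) (by rw [length_permuteW, (hlen ha).1])
      (by rw [length_permuteW, (hlen ha).2])
  refine Set.ncard_le_ncard_of_injOn Φ (fun a ha => ?_) (fun a ha b hb hab => ?_)
    ((List.finite_toSet pi.permutations).subset fun a ha =>
      List.mem_permutations.2 (perm_of_mem_coproductFiber ha))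
  · have hperm : Φ a ~ a :=
      ((permuteW_perm σ (hlen ha).1).append (permuteW_perm τ (hlen ha).2)).trans
        (List.Perm.of_eq (List.take_append_drop j a))
    refine ⟨ha.1.of_perm hperm.symm, (sortW_eq_sortW_iff_perm.2 hperm).trans ha.2.1, ?_, ?_⟩
    · rw [(hsplit ha).1, park_permuteW σ (hlen ha).1, ha.2.2.1]
    · rw [(hsplit ha).2, park_permuteW τ (hlen ha).2, ha.2.2.2]
  · have htake := (hsplit ha).1.symm.trans ((congrArg (·.take j) hab).trans (hsplit hb).1)
    have hdrop := (hsplit ha).2.symm.trans ((congrArg (·.drop j) hab).trans (hsplit hb).2)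
    rw [← List.take_append_drop j a, ← List.take_append_drop j b,
      permuteW_injOn σ (hlen ha).1 (hlen hb).1 htake,
      permuteW_injOn τ (hlen ha).2 (hlen hb).2 hdrop]

theorem CQSym_subcoalgebra_general (j : ℕ) (pi c c' d d' : List ℕ)
    (hcc : sortW c = sortW c')
    (hdd : sortW d = sortW d') :
    {a : List ℕ | IsPF a ∧ sortW a = pi ∧ park (a.take j) = c ∧
        park (a.drop j) = d}.ncard
      = {a : List ℕ | IsPF a ∧ sortW a = pi ∧ park (a.take j) = c' ∧
          park (a.drop j) = d'}.ncard := by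
  have hc : c ~ c' := sortW_eq_sortW_iff_perm.1 hcc
  have hd : d ~ d' := sortW_eq_sortW_iff_perm.1 hdd
  exact le_antisymm (ncard_coproductFiber_le j hc hd) (ncard_coproductFiber_le j hc.symm hd.symm)

/-- for a nondecreasing parking function `π` of length `n`, `0 ≤ j ≤ n`,
`c, c' ∈ PF_j` with `c↑ = c'↑` and `d, d' ∈ PF_{n-j}` with `d↑ = d'↑`, the number of
`a ∈ PF_n` with `a↑ = π`, `Park(a₁⋯a_j) = c`, `Park(a_{j+1}⋯a_n) = d` equals the
corresponding number for `(c', d')` (CQSym is a subcoalgebra of PQSym). -/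
theorem CQSym_subcoalgebra (n j : ℕ) (hj : j ≤ n) (pi c c' d d' : List ℕ)
    (hpi : IsPF pi) (hpis : pi.Pairwise (· ≤ ·)) (hlen : pi.length = n)
    (hc : IsPF c) (hlc : c.length = j) (hc' : IsPF c') (hlc' : c'.length = j)
    (hcc : sortW c = sortW c')
    (hd : IsPF d) (hld : d.length = n - j) (hd' : IsPF d') (hld' : d'.length = n - j)
    (hdd : sortW d = sortW d') :
    {a : List ℕ | IsPF a ∧ sortW a = pi ∧ park (a.take j) = c ∧
        park (a.drop j) = d}.ncard
      = {a : List ℕ | IsPF a ∧ sortW a = pi ∧ park (a.take j) = c' ∧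
          park (a.drop j) = d'}.ncard :=
  CQSym_subcoalgebra_general j pi c c' d d' hcc hdd
end

section
/- Cocommutativity of CQSym: let π be a nondecreasing parking function of length n, let 0 ≤ j ≤ n, and let σ be a nondecreasing parking function of length j and τ a nondecreasing parking function of length n−j. Then #{ a ∈ PF_n : a↑ = π, Park(a_1⋯a_j)↑ = σ, Park(a_{j+1}⋯a_n)↑ = τ } = #{ a ∈ PF_n : a↑ = π, Park(a_1⋯a_{n−j})↑ = τ, Park(a_{n−j+1}⋯a_n)↑ = σ }. -/
open List

/-
The rotation `a ↦ a_{j+1}⋯a_n a_1⋯a_j` is a bijection between the two sets: it preserves `a↑`,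
hence the parking-function property, and it exchanges the prefix of length `j` with the suffix of
length `n - j`.
-/

theorem sortW_eq_sort (w : List ℕ) : sortW w = Multiset.sort (w : Multiset ℕ) := rfl

theorem List.Perm.sortW_eq {a b : List ℕ} (h : a ~ b) : sortW a = sortW b := by
  rw [sortW_eq_sort, sortW_eq_sort, Multiset.coe_eq_coe.2 h]

theorem length_sortW (w : List ℕ) : (sortW w).length = w.length :=
  List.length_mergeSort w

theorem List.Perm.isPF {a b : List ℕ} (h : a ~ b) (ha : IsPF a) : IsPF b :=
  ⟨fun x hx => ha.1 x (h.mem_iff.2 hx), fun i hi => h.sortW_eq ▸ ha.2 i (h.length_eq ▸ hi)⟩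

namespace List

variable {α : Type*}

theorem take_rotate_of_length_eq {a : List α} {k m : ℕ} (h : a.length = k + m) :
    (a.rotate k).take m = a.drop k := by
  rw [rotate_eq_drop_append_take (by omega), take_left' (by simp [h])]

theorem drop_rotate_of_length_eq {a : List α} {k m : ℕ} (h : a.length = k + m) :
    (a.rotate k).drop m = a.take k := by
  rw [rotate_eq_drop_append_take (by omega), drop_left' (by simp [h])]

theorem rotate_rotate_of_length_eq {a : List α} {k m : ℕ} (h : a.length = k + m) :
    (a.rotate k).rotate m = a := by
  rw [rotate_rotate, ← h, rotate_length]

theorem ncard_setOf_take_drop_comm {P Q R : List α → Prop} {k m : ℕ}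
    (hperm : ∀ {a b}, a ~ b → P a → P b) (hlen : ∀ a, P a → a.length = k + m) :
    {a | P a ∧ Q (a.take k) ∧ R (a.drop k)}.ncard
      = {a | P a ∧ R (a.take m) ∧ Q (a.drop m)}.ncard := by
  have himage : {a | P a ∧ R (a.take m) ∧ Q (a.drop m)}
      = (·.rotate k) '' {a | P a ∧ Q (a.take k) ∧ R (a.drop k)} := by
    ext b
    constructor
    · rintro ⟨hb, hR, hQ⟩
      have hb' : b.length = m + k := by rw [hlen b hb, Nat.add_comm]
      refine ⟨b.rotate m, ⟨hperm (rotate_perm b m).symm hb, ?_, ?_⟩, rotate_rotate_of_length_eq hb'⟩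
      · rwa [take_rotate_of_length_eq hb']
      · rwa [drop_rotate_of_length_eq hb']
    · rintro ⟨a, ⟨ha, hQ, hR⟩, rfl⟩
      have ha' := hlen a ha
      exact ⟨hperm (rotate_perm a k).symm ha, by rwa [take_rotate_of_length_eq ha'],
        by rwa [drop_rotate_of_length_eq ha']⟩
  rw [himage, Set.ncard_image_of_injective _ (rotate_injective k)]

end List

theorem CQSym_cocommutative_general (n j : ℕ) (hj : j ≤ n) (pi sg ta : List ℕ)
    (hlen : pi.length = n) :
    {a : List ℕ | IsPF a ∧ sortW a = pi ∧ sortW (park (a.take j)) = sg ∧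
        sortW (park (a.drop j)) = ta}.ncard
      = {a : List ℕ | IsPF a ∧ sortW a = pi ∧ sortW (park (a.take (n - j))) = ta ∧
          sortW (park (a.drop (n - j))) = sg}.ncard := by
  have hperm {a b : List ℕ} (h : a ~ b) (ha : IsPF a ∧ sortW a = pi) : IsPF b ∧ sortW b = pi :=
    ⟨h.isPF ha.1, h.sortW_eq ▸ ha.2⟩
  have hlength (a : List ℕ) (ha : IsPF a ∧ sortW a = pi) : a.length = j + (n - j) := by
    rw [← length_sortW, ha.2, hlen]; omega
  simpa only [and_assoc] using
    List.ncard_setOf_take_drop_comm (Q := fun u => sortW (park u) = sg)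
      (R := fun v => sortW (park v) = ta) hperm hlength

/-- cocommutativity of CQSym: for a nondecreasing parking function `π`
of length `n`, `0 ≤ j ≤ n`, and nondecreasing parking functions `σ` of length `j` and
`τ` of length `n - j`:
`#{a : a↑ = π, Park(a₁⋯a_j)↑ = σ, Park(a_{j+1}⋯a_n)↑ = τ}`
`= #{a : a↑ = π, Park(a₁⋯a_{n-j})↑ = τ, Park(a_{n-j+1}⋯a_n)↑ = σ}`. -/
theorem CQSym_cocommutative (n j : ℕ) (hj : j ≤ n) (pi sg ta : List ℕ)
    (hpi : IsPF pi) (hpis : pi.Pairwise (· ≤ ·)) (hlen : pi.length = n)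
    (hsg : IsPF sg) (hsgs : sg.Pairwise (· ≤ ·)) (hlsg : sg.length = j)
    (hta : IsPF ta) (htas : ta.Pairwise (· ≤ ·)) (hlta : ta.length = n - j) :
    {a : List ℕ | IsPF a ∧ sortW a = pi ∧ sortW (park (a.take j)) = sg ∧
        sortW (park (a.drop j)) = ta}.ncard
      = {a : List ℕ | IsPF a ∧ sortW a = pi ∧ sortW (park (a.take (n - j))) = ta ∧
          sortW (park (a.drop (n - j))) = sg}.ncard :=
  CQSym_cocommutative_general n j hj pi sg ta hlen
end
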